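/- arXiv:0809.4500 — 3 statements merged into one kernel-verified Lean document; each statement's English description precedes it below -/
import Mathlib

section
/- For any two matrices U ∈ ℂ^{m×p} and V ∈ ℂ^{q×m}, the matrix E := U(VU)†V satisfies R(E) = R(UU*V*) = R(UU*V*V). -/
open Matrix

/-- The four Penrose conditions characterizing the Moore-Penrose inverse. -/
def IsMoorePenrose {m n : ℕ} (A : Matrix (Fin m) (Fin n) ℂ)
    (X : Matrix (Fin n) (Fin m) ℂ) : Prop :=
  A * X * A = A ∧ X * A * X = X ∧ (A * X)ᴴ = A * X ∧ (X * A)ᴴ = X * A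

/-- The range (column space) of a matrix, as a subspace of Euclidean space. -/
noncomputable def mrange {m n : ℕ} (A : Matrix (Fin m) (Fin n) ℂ) :
    Submodule ℂ (EuclideanSpace ℂ (Fin m)) :=
  LinearMap.range (Matrix.toEuclideanLin A)

/-- The null space of a matrix, as a subspace of Euclidean space. -/
noncomputable def mker {m n : ℕ} (A : Matrix (Fin m) (Fin n) ℂ) :
    Submodule ℂ (EuclideanSpace ℂ (Fin n)) :=
  LinearMap.ker (Matrix.toEuclideanLin A)

lemma mrange_mul_le {m n k : ℕ} (A : Matrix (Fin m) (Fin n) ℂ)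
    (B : Matrix (Fin n) (Fin k) ℂ) : mrange (A * B) ≤ mrange A := by
  rintro x ⟨y, rfl⟩
  refine ⟨Matrix.toEuclideanLin B y, ?_⟩
  simp [Matrix.toEuclideanLin_apply, Matrix.mulVec_mulVec]

lemma mrange_le_of_factor {m n k : ℕ} {A : Matrix (Fin m) (Fin n) ℂ}
    {B : Matrix (Fin m) (Fin k) ℂ} (C : Matrix (Fin k) (Fin n) ℂ)
    (h : A = B * C) : mrange A ≤ mrange B := by
  rw [h]; exact mrange_mul_le B C

/-- For any matrices `U ∈ ℂ^{m×p}` and `V ∈ ℂ^{q×m}`, the matrix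
`E = U (VU)† V` satisfies `R(E) = R(UU*V*) = R(UU*V*V)`. -/
theorem stmt7 {m p q : ℕ} (U : Matrix (Fin m) (Fin p) ℂ) (V : Matrix (Fin q) (Fin m) ℂ)
    (X : Matrix (Fin p) (Fin q) ℂ) (hX : IsMoorePenrose (V * U) X) :
    mrange (U * X * V) = mrange (U * Uᴴ * Vᴴ) ∧
      mrange (U * X * V) = mrange (U * Uᴴ * Vᴴ * V) := by
  obtain ⟨h1, h2, h3, h4⟩ := hX
  -- X = Aᴴ Xᴴ X where A = V*U
  have hx : X = Uᴴ * Vᴴ * Xᴴ * X := by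
    conv_lhs => rw [← h2, ← h4]
    simp [Matrix.conjTranspose_mul, Matrix.mul_assoc]
  -- Aᴴ = X A Aᴴ
  have hA1 : Uᴴ * Vᴴ = X * (V * U) * (Uᴴ * Vᴴ) := by
    calc Uᴴ * Vᴴ = (V * U)ᴴ := (Matrix.conjTranspose_mul _ _).symm
      _ = ((V * U * X) * (V * U))ᴴ := by rw [h1]
      _ = ((V * U) * (X * (V * U)))ᴴ := by rw [Matrix.mul_assoc, Matrix.mul_assoc]
      _ = (X * (V * U))ᴴ * (V * U)ᴴ := Matrix.conjTranspose_mul _ _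
      _ = X * (V * U) * (Uᴴ * Vᴴ) := by rw [h4, Matrix.conjTranspose_mul]
  -- Aᴴ = Aᴴ A X
  have hA2 : Uᴴ * Vᴴ = Uᴴ * Vᴴ * (V * U) * X := by
    calc Uᴴ * Vᴴ = (V * U)ᴴ := (Matrix.conjTranspose_mul _ _).symm
      _ = ((V * U * X) * (V * U))ᴴ := by rw [h1]
      _ = (V * U)ᴴ * (V * U * X)ᴴ := Matrix.conjTranspose_mul _ _
      _ = Uᴴ * Vᴴ * (V * U) * X := by
          rw [h3, Matrix.conjTranspose_mul]; simp [Matrix.mul_assoc]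
  have e1 : U * X * V = (U * Uᴴ * Vᴴ) * (Xᴴ * (X * V)) := by
    conv_lhs => rw [hx]
    simp [Matrix.mul_assoc]
  have e2 : U * Uᴴ * Vᴴ = (U * X * V) * (U * Uᴴ * Vᴴ) := by
    conv_lhs => rw [Matrix.mul_assoc, hA1]
    simp [Matrix.mul_assoc]
  have e3 : U * Uᴴ * Vᴴ = (U * Uᴴ * Vᴴ * V) * (U * X) := by
    conv_lhs => rw [Matrix.mul_assoc, hA2]
    simp [Matrix.mul_assoc]
  have r12 : mrange (U * X * V) = mrange (U * Uᴴ * Vᴴ) :=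
    le_antisymm (mrange_le_of_factor _ e1) (mrange_le_of_factor _ e2)
  have r23 : mrange (U * Uᴴ * Vᴴ) = mrange (U * Uᴴ * Vᴴ * V) :=
    le_antisymm (mrange_le_of_factor _ e3) (mrange_mul_le _ _)
  exact ⟨r12, r12.trans r23⟩
end

section
/- For any two matrices U ∈ ℂ^{m×p} and V ∈ ℂ^{q×m}, one has R(V*) ∩ N(U*V*V) = (V*V)†((R(U) + N(V))⊥), where (V*V)†(S) denotes the image of the subspace S under the linear map given by the matrix (V*V)† and ⊥ denotes orthogonal complement in ℂ^m. -/
open Matrix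

/-!
Put `A = V*V` and `W = A†`. Then `R(V*) = R(A)` and `(R(U) + N(V))⊥ = N(U*) ∩ R(A)`. The Penrose
equations give `A W A = A`, `W A A = A` (as `A` is Hermitian) and `W = A (W* W)`, so `W` maps into
`R(A)` and `A`, `W` are mutually inverse on `R(A)`. Hence `W` carries `N(U*) ∩ R(A)` onto the
vectors `y ∈ R(A)` with `U* A y = 0`, with `A` as the inverse map.
-/

theorem LinearMap.range_inf_ker_comp_eq_map {R M N : Type*} [Semiring R] [AddCommMonoid M]
    [AddCommMonoid N] [Module R M] [Module R N] (a w : M →ₗ[R] M) (g : M →ₗ[R] N)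
    (haw : a ∘ₗ w ∘ₗ a = a) (hwa : w ∘ₗ a ∘ₗ a = a) (hw : range w ≤ range a) :
    range a ⊓ ker (g ∘ₗ a) = (ker g ⊓ range a).map w := by
  ext y
  simp only [Submodule.mem_inf, Submodule.mem_map, mem_ker, mem_range, comp_apply]
  constructor
  · rintro ⟨⟨z, rfl⟩, hg⟩
    exact ⟨a (a z), ⟨hg, a z, rfl⟩, LinearMap.congr_fun hwa z⟩
  · rintro ⟨x, ⟨hgx, z, rfl⟩, rfl⟩
    refine ⟨hw (mem_range_self w (a z)), ?_⟩
    rw [show a (w (a z)) = a z from LinearMap.congr_fun haw z, hgx]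

theorem Matrix.toEuclideanLin_mul {𝕜 l m n : Type*} [RCLike 𝕜] [Fintype m] [Fintype n]
    [DecidableEq m] [DecidableEq n] (A : Matrix l m 𝕜) (B : Matrix m n 𝕜) :
    toEuclideanLin (A * B) = toEuclideanLin A ∘ₗ toEuclideanLin B := by
  ext x
  simp [mulVec_mulVec]

namespace IsMoorePenrose

variable {m n : ℕ} {A : Matrix (Fin m) (Fin n) ℂ} {X : Matrix (Fin n) (Fin m) ℂ}

theorem mul_mul_conjTranspose (h : IsMoorePenrose A X) : X * A * Aᴴ = Aᴴ := by
  obtain ⟨hAXA, -, -, hXA⟩ := h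
  rw [← hXA, ← conjTranspose_mul, ← Matrix.mul_assoc, hAXA]

theorem eq_conjTranspose_mul (h : IsMoorePenrose A X) : X = Aᴴ * (Xᴴ * X) := by
  obtain ⟨-, hXAX, -, hXA⟩ := h
  rw [← Matrix.mul_assoc, ← conjTranspose_mul, hXA, hXAX]

end IsMoorePenrose

/-- For any matrices `U ∈ ℂ^{m×p}` and `V ∈ ℂ^{q×m}`,
`R(V*) ∩ N(U*V*V) = (V*V)†((R(U) + N(V))⊥)`. -/
theorem stmt12 {m p q : ℕ} (U : Matrix (Fin m) (Fin p) ℂ) (V : Matrix (Fin q) (Fin m) ℂ)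
    (W : Matrix (Fin m) (Fin m) ℂ) (hW : IsMoorePenrose (Vᴴ * V) W) :
    mrange Vᴴ ⊓ mker (Uᴴ * Vᴴ * V) =
      Submodule.map (Matrix.toEuclideanLin W) ((mrange U ⊔ mker V)ᗮ) := by
  have hA : (Vᴴ * V)ᴴ = Vᴴ * V := by rw [conjTranspose_mul, conjTranspose_conjTranspose]
  have hrange : mrange Vᴴ = mrange (Vᴴ * V) := by
    rw [mrange, mrange, toEuclideanLin_mul, toEuclideanLin_conjTranspose_eq_adjoint,
      LinearMap.range_adjoint_comp_self]
  have horth : (mrange U ⊔ mker V)ᗮ = mker Uᴴ ⊓ mrange (Vᴴ * V) := by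
    rw [← Submodule.inf_orthogonal, mrange, mker, LinearMap.orthogonal_range,
      LinearMap.orthogonal_ker, ← toEuclideanLin_conjTranspose_eq_adjoint,
      ← toEuclideanLin_conjTranspose_eq_adjoint, ← mrange, hrange, mker]
  rw [hrange, horth, mrange, mker, mker, Matrix.mul_assoc, toEuclideanLin_mul Uᴴ]
  refine LinearMap.range_inf_ker_comp_eq_map (toEuclideanLin (Vᴴ * V)) (toEuclideanLin W)
    (toEuclideanLin Uᴴ) ?_ ?_ ?_
  · rw [← toEuclideanLin_mul, ← toEuclideanLin_mul, ← Matrix.mul_assoc, hW.1]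
  · have hWAA : W * (Vᴴ * V) * (Vᴴ * V) = Vᴴ * V := by
      simpa only [hA] using hW.mul_mul_conjTranspose
    rw [← toEuclideanLin_mul, ← toEuclideanLin_mul, ← Matrix.mul_assoc, hWAA]
  · rw [hW.eq_conjTranspose_mul, hA, toEuclideanLin_mul]
    exact LinearMap.range_comp_le_range _ _
end

section
/- Let A₁ ∈ ℂ^{m×n}, b₁ ∈ ℂ^m, A₂ ∈ ℂ^{k×n} with rank(A₂) = k ≥ 1, b₂ ∈ ℂ^k, and let D₂ ∈ ℂ^{n×s} be any matrix with R(D₂) = N(A₂). If x ∈ ℂ^n minimizes ‖A₁x − b₁‖² over all x satisfying A₂x = b₂, then there exists z ∈ N(A₂) such that x = D₂(A₁D₂)†A₁A₁†b₁ + (I − D₂(A₁D₂)†A₁)(A₂†b₂ + z). -/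
/-!
Moving a minimizer `x` along `D₂ w` keeps it feasible, because `R(D₂) ⊆ N(A₂)`. Hence the
residual `A₁x - b₁` is orthogonal to `R(A₁D₂)`, i.e. `(A₁D₂)ᴴ (A₁x - b₁) = 0`. The Penrose
equations give `X = X Xᴴ (A₁D₂)ᴴ`, so `X` also kills the residual, and `X A₁ A₁† = X`. Together
these give `D₂XA₁A₁†b₁ = D₂XA₁x`. Because `A₂` has full row rank, `A₂A₂† = I`, and
`z = x - A₂†b₂` is the required null vector.
-/

open Matrix

theorem Submodule.mem_orthogonal_of_forall_norm_le_norm_add {𝕜 E : Type*} [RCLike 𝕜]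
    [NormedAddCommGroup E] [InnerProductSpace 𝕜 E] (K : Submodule 𝕜 E) {v : E}
    (h : ∀ w ∈ K, ‖v‖ ≤ ‖v + w‖) : v ∈ Kᗮ := by
  have hmin : ‖v - 0‖ = ⨅ w : K, ‖v - w‖ := by
    refine le_antisymm (le_ciInf fun w => ?_) (ciInf_le ⟨0, ?_⟩ (0 : K))
    · simpa [sub_eq_add_neg] using h _ (K.neg_mem w.2)
    · rintro _ ⟨w, rfl⟩; exact norm_nonneg _
  have hinner := (K.norm_eq_iInf_iff_inner_eq_zero K.zero_mem).1 hmin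
  rw [Submodule.mem_orthogonal]
  intro w hw
  rw [inner_eq_zero_symm]
  simpa using hinner w hw

theorem LinearMap.adjoint_apply_eq_zero_of_forall_norm_le {𝕜 E F : Type*} [RCLike 𝕜]
    [NormedAddCommGroup E] [InnerProductSpace 𝕜 E] [FiniteDimensional 𝕜 E]
    [NormedAddCommGroup F] [InnerProductSpace 𝕜 F] [FiniteDimensional 𝕜 F]
    (T : E →ₗ[𝕜] F) {v : F} (h : ∀ w, ‖v‖ ≤ ‖v + T w‖) : T.adjoint v = 0 := by
  rw [← LinearMap.mem_ker, ← T.orthogonal_range]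
  refine T.range.mem_orthogonal_of_forall_norm_le_norm_add ?_
  rintro _ ⟨w, rfl⟩
  exact h w

theorem Matrix.mul_eq_one_of_mul_mul_eq_self_of_rank_eq {K m n : Type*} [Field K] [Fintype m]
    [Fintype n] [DecidableEq m] {A : Matrix m n K} {B : Matrix n m K} (hABA : A * B * A = A)
    (hA : A.rank = Fintype.card m) : A * B = 1 := by
  have hsurj : Function.Surjective A.mulVecLin := by
    rw [← LinearMap.range_eq_top]
    apply Submodule.eq_top_of_finrank_eq
    rw [← Matrix.rank, hA, Module.finrank_fintype_fun_eq_card]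
  refine Matrix.toLin'.injective (LinearMap.ext fun y => ?_)
  obtain ⟨w, rfl⟩ := hsurj y
  simp [Matrix.mulVec_mulVec, hABA]

theorem LinearMap.adjoint_comp_apply_sub_eq_zero_of_isMinOn {𝕜 E F G H : Type*} [RCLike 𝕜]
    [AddCommGroup E] [Module 𝕜 E] [AddCommGroup G] [Module 𝕜 G]
    [NormedAddCommGroup F] [InnerProductSpace 𝕜 F] [FiniteDimensional 𝕜 F]
    [NormedAddCommGroup H] [InnerProductSpace 𝕜 H] [FiniteDimensional 𝕜 H]
    (T : E →ₗ[𝕜] F) (C : E →ₗ[𝕜] G) (D : H →ₗ[𝕜] E) (hD : range D ≤ ker C)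
    {b : F} {c : G} {x : E} (hx : C x = c)
    (hmin : IsMinOn (fun y => ‖T y - b‖ ^ 2) {y | C y = c} x) :
    (T ∘ₗ D).adjoint (T x - b) = 0 := by
  refine (T ∘ₗ D).adjoint_apply_eq_zero_of_forall_norm_le fun w => ?_
  have hfeasible : C (x + D w) = c := by
    rw [map_add, hD ⟨w, rfl⟩, hx, add_zero]
  have hle := isMinOn_iff.1 hmin _ hfeasible
  rw [pow_le_pow_iff_left₀ (norm_nonneg _) (norm_nonneg _) two_ne_zero] at hle
  simpa [add_sub_right_comm] using hle

namespace IsMoorePenrose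

variable {m n : ℕ} {A : Matrix (Fin m) (Fin n) ℂ} {X : Matrix (Fin n) (Fin m) ℂ}

theorem mul_conjTranspose_mul_conjTranspose (h : IsMoorePenrose A X) : X * Xᴴ * Aᴴ = X := by
  rw [Matrix.mul_assoc, ← conjTranspose_mul, h.2.2.1, ← Matrix.mul_assoc, h.2.1]

theorem conjTranspose_mul_mul (h : IsMoorePenrose A X) : Aᴴ * (A * X) = Aᴴ := by
  rw [← h.2.2.1, ← conjTranspose_mul, h.1]

theorem mul_mul_eq_of_mul {s : ℕ} {D : Matrix (Fin n) (Fin s) ℂ}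
    {Y : Matrix (Fin s) (Fin m) ℂ} (hY : IsMoorePenrose (A * D) Y) (hX : IsMoorePenrose A X) :
    Y * A * X = Y :=
  calc Y * A * X = Y * Yᴴ * (A * D)ᴴ * A * X := by rw [hY.mul_conjTranspose_mul_conjTranspose]
    _ = Y * Yᴴ * Dᴴ * (Aᴴ * (A * X)) := by simp only [conjTranspose_mul, Matrix.mul_assoc]
    _ = Y * Yᴴ * (A * D)ᴴ := by rw [hX.conjTranspose_mul_mul, conjTranspose_mul, Matrix.mul_assoc]
    _ = Y := hY.mul_conjTranspose_mul_conjTranspose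

theorem mker_conjTranspose_le (h : IsMoorePenrose A X) : mker Aᴴ ≤ mker X := by
  intro v (hv : toEuclideanLin Aᴴ v = 0)
  show toEuclideanLin X v = 0
  rw [← h.mul_conjTranspose_mul_conjTranspose, toLpLin_mul_same, LinearMap.comp_apply, hv,
    map_zero]

end IsMoorePenrose

theorem stmt14_general {m n k s : ℕ}
    (A₁ : Matrix (Fin m) (Fin n) ℂ) (b₁ : EuclideanSpace ℂ (Fin m))
    (A₂ : Matrix (Fin k) (Fin n) ℂ) (b₂ : EuclideanSpace ℂ (Fin k))
    (hA₂ : A₂.rank = k)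
    (D₂ : Matrix (Fin n) (Fin s) ℂ) (hD₂ : mrange D₂ = mker A₂)
    (A₁d : Matrix (Fin n) (Fin m) ℂ) (hA₁d : IsMoorePenrose A₁ A₁d)
    (A₂d : Matrix (Fin n) (Fin k) ℂ) (hA₂d : IsMoorePenrose A₂ A₂d)
    (X : Matrix (Fin s) (Fin m) ℂ) (hX : IsMoorePenrose (A₁ * D₂) X)
    (x : EuclideanSpace ℂ (Fin n))
    (hxc : Matrix.toEuclideanLin A₂ x = b₂)
    (hxmin : ∀ y : EuclideanSpace ℂ (Fin n), Matrix.toEuclideanLin A₂ y = b₂ →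
      ‖Matrix.toEuclideanLin A₁ x - b₁‖ ^ 2 ≤ ‖Matrix.toEuclideanLin A₁ y - b₁‖ ^ 2) :
    ∃ z ∈ mker A₂,
      x = Matrix.toEuclideanLin (D₂ * X * A₁ * A₁d) b₁ +
        Matrix.toEuclideanLin (1 - D₂ * X * A₁)
          (Matrix.toEuclideanLin A₂d b₂ + z) := by
  have hA₂A₂d : A₂ * A₂d = 1 :=
    Matrix.mul_eq_one_of_mul_mul_eq_self_of_rank_eq hA₂d.1 (by rw [hA₂, Fintype.card_fin])
  have hnormal : toEuclideanLin A₁ x - b₁ ∈ mker (A₁ * D₂)ᴴ := by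
    show toEuclideanLin (A₁ * D₂)ᴴ _ = 0
    rw [toEuclideanLin_conjTranspose_eq_adjoint, toLpLin_mul_same]
    exact LinearMap.adjoint_comp_apply_sub_eq_zero_of_isMinOn _ _ _ hD₂.le hxc
      (isMinOn_iff.2 hxmin)
  have hXA₁x : toEuclideanLin X (toEuclideanLin A₁ x) = toEuclideanLin X b₁ := by
    have := hX.mker_conjTranspose_le hnormal
    rwa [mker, LinearMap.mem_ker, map_sub, sub_eq_zero] at this
  have hD₂XA₁A₁d : D₂ * X * A₁ * A₁d = D₂ * X := by
    rw [Matrix.mul_assoc (D₂ * X), Matrix.mul_assoc D₂, ← Matrix.mul_assoc X,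
      hX.mul_mul_eq_of_mul hA₁d]
  refine ⟨x - toEuclideanLin A₂d b₂, ?_, ?_⟩
  · show toEuclideanLin A₂ (x - toEuclideanLin A₂d b₂) = 0
    rw [map_sub, hxc, ← LinearMap.comp_apply, ← toLpLin_mul_same, hA₂A₂d, toLpLin_one,
      LinearMap.id_apply, sub_self]
  · rw [add_sub_cancel, hD₂XA₁A₁d]
    simp only [toLpLin_mul_same, map_sub, toLpLin_one, LinearMap.sub_apply, LinearMap.id_apply,
      LinearMap.comp_apply, hXA₁x]
    abel

/-- Any minimizer of `‖A₁x − b₁‖²` subject to `A₂x = b₂` has the form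
`D₂(A₁D₂)†A₁A₁†b₁ + (I − D₂(A₁D₂)†A₁)(A₂†b₂ + z)` for some `z ∈ N(A₂)`,
where `R(D₂) = N(A₂)`. -/
theorem stmt14 {m n k s : ℕ}
    (A₁ : Matrix (Fin m) (Fin n) ℂ) (b₁ : EuclideanSpace ℂ (Fin m))
    (A₂ : Matrix (Fin k) (Fin n) ℂ) (b₂ : EuclideanSpace ℂ (Fin k))
    (hk : 1 ≤ k) (hA₂ : A₂.rank = k)
    (D₂ : Matrix (Fin n) (Fin s) ℂ) (hD₂ : mrange D₂ = mker A₂)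
    (A₁d : Matrix (Fin n) (Fin m) ℂ) (hA₁d : IsMoorePenrose A₁ A₁d)
    (A₂d : Matrix (Fin n) (Fin k) ℂ) (hA₂d : IsMoorePenrose A₂ A₂d)
    (X : Matrix (Fin s) (Fin m) ℂ) (hX : IsMoorePenrose (A₁ * D₂) X)
    (x : EuclideanSpace ℂ (Fin n))
    (hxc : Matrix.toEuclideanLin A₂ x = b₂)
    (hxmin : ∀ y : EuclideanSpace ℂ (Fin n), Matrix.toEuclideanLin A₂ y = b₂ →
      ‖Matrix.toEuclideanLin A₁ x - b₁‖ ^ 2 ≤ ‖Matrix.toEuclideanLin A₁ y - b₁‖ ^ 2) :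
    ∃ z ∈ mker A₂,
      x = Matrix.toEuclideanLin (D₂ * X * A₁ * A₁d) b₁ +
        Matrix.toEuclideanLin (1 - D₂ * X * A₁)
          (Matrix.toEuclideanLin A₂d b₂ + z) :=
  stmt14_general A₁ b₁ A₂ b₂ hA₂ D₂ hD₂ A₁d hA₁d A₂d hA₂d X hX x hxc hxmin
end
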